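/- Let n ≥ 1, Δ ≥ 1 and L be integers with L ≥ 8(Δ+n−1). Run Peek Reset with latency L on an n-th order time-homogeneous Markov reward instance whose transition digraph has diameter Δ. Then OPT ≤ (1 + 2(Δ+n)(Δ+n−1)/(L − 8(Δ+n−1) + 1))·ON; that is, the competitive ratio of Peek Reset is at most 1 + 2(Δ+n)(Δ+n−1)/(L − 8(Δ+n−1) + 1). -/

import Mathlib

/-!
Rewards are time-homogeneous, so every reward collected inside the horizon is at most the
reward `Q` of a best walk `w₀` of `n` edges. In a phase `[a, b)` the algorithm could deviate,
in at most `Δ` steps, onto the offline path and then follow it with that delay; as its block is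
optimal, the offline path gains at most `(Δ + n - 1) Q` on it in that phase. It could also walk
to `w₀` and then cycle through `w₀` and back, collecting `Q` once every `Δ + n` steps; since
phases last more than `L / 2` steps, every phase that ends inside the horizon earns it at least
`(L - 8(Δ + n - 1) + 1) Q / (2(Δ + n))`. Charging the loss of each phase after the first to the
earnings of the phase before it gives the ratio.
-/

open Finset Filter

theorem sum_range_sum_Ico_eq_sum_Ico {M : Type*} [AddCommMonoid M] (f : ℤ → M) {τ : ℕ → ℤ}
    (hτ : Monotone τ) (N : ℕ) :
    ∑ i ∈ range N, ∑ t ∈ Ico (τ i) (τ (i + 1)), f t = ∑ t ∈ Ico (τ 0) (τ N), f t := by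
  induction N with
  | zero => simp
  | succ N ih =>
    rw [sum_range_succ, ih, ← sum_union (Ico_disjoint_Ico_consecutive _ _ _),
      Ico_union_Ico_eq_Ico (hτ N.zero_le) (hτ N.le_succ)]

theorem sum_range_sum_Ico_eq_sum_Icc {M : Type*} [AddCommMonoid M] {f : ℤ → M} {τ : ℕ → ℤ}
    (hτ : Monotone τ) {T : ℤ} {N : ℕ} (h0 : τ 0 ≤ T + 1) (hN : T < τ N)
    (hf : ∀ t, T < t → f t = 0) :
    ∑ i ∈ range N, ∑ t ∈ Ico (τ i) (τ (i + 1)), f t = ∑ t ∈ Icc (τ 0) T, f t := by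
  have htail : ∑ t ∈ Ico (T + 1) (τ N), f t = 0 :=
    sum_eq_zero fun t ht => hf t (by rw [mem_Ico] at ht; omega)
  rw [sum_range_sum_Ico_eq_sum_Ico f hτ, ← Ico_add_one_right_eq_Icc,
    ← Ico_union_Ico_eq_Ico h0 hN, sum_union (Ico_disjoint_Ico_consecutive _ _ _), htail,
    add_zero]

theorem StrictMono.exists_le_lt_succ {τ : ℕ → ℤ} (hτ : StrictMono τ) {T : ℤ} (hT : τ 0 ≤ T) :
    ∃ N, τ N ≤ T ∧ T < τ (N + 1) := by
  have hgrow : ∀ k : ℕ, τ 0 + k ≤ τ k := fun k => by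
    induction k with
    | zero => simp
    | succ k ih => have := hτ (Nat.lt_add_one k); push_cast; omega
  have hlim : Tendsto τ atTop atTop :=
    tendsto_atTop_mono hgrow (tendsto_atTop_add_const_left _ _ tendsto_natCast_atTop_atTop)
  obtain ⟨N, hN, hNT⟩ := hτ.exists_between_of_tendsto_atTop hlim (x := T + 1) (by omega)
  exact ⟨N, by omega, by omega⟩

theorem sum_range_succ_le_one_add_mul {F H : ℕ → ℝ} {N : ℕ} {Q c e D : ℝ} (hc : 0 ≤ c)
    (he : 0 ≤ e) (hD : 0 < D) (hH : ∀ i, 0 ≤ H i) (h0 : F 0 ≤ H 0)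
    (hF : ∀ i < N, F (i + 1) ≤ H (i + 1) + c * Q) (hQ : ∀ i < N, D * Q ≤ e * H i) :
    ∑ i ∈ range (N + 1), F i ≤ (1 + e * c / D) * ∑ i ∈ range (N + 1), H i := by
  have hloss : ∑ i ∈ range (N + 1), F i ≤ ∑ i ∈ range (N + 1), H i + N * (c * Q) := by
    have := sum_le_sum fun i hi => hF i (mem_range.1 hi)
    rw [sum_add_distrib, sum_const, card_range, nsmul_eq_mul] at this
    rw [sum_range_succ', sum_range_succ' H]
    linarith
  have hgain : N * (D * Q) ≤ e * ∑ i ∈ range (N + 1), H i := calc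
    N * (D * Q) = ∑ i ∈ range N, D * Q := by simp
    _ ≤ ∑ i ∈ range N, e * H i := sum_le_sum fun i hi => hQ i (mem_range.1 hi)
    _ = e * ∑ i ∈ range N, H i := (mul_sum ..).symm
    _ ≤ e * ∑ i ∈ range (N + 1), H i :=
      mul_le_mul_of_nonneg_left (by rw [sum_range_succ]; linarith [hH N]) he
  have hcharge : N * (c * Q) ≤ e * c / D * ∑ i ∈ range (N + 1), H i := calc
    N * (c * Q) = c / D * (N * (D * Q)) := by field_simp
    _ ≤ c / D * (e * ∑ i ∈ range (N + 1), H i) := by gcongr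
    _ = e * c / D * ∑ i ∈ range (N + 1), H i := by ring
  linarith

theorem sum_ite_le_mul_of_subset_Ico {s : Finset ℤ} {p : ℤ → Prop} [DecidablePred p] {u : ℤ}
    {k : ℕ} {Q : ℝ} (hQ : 0 ≤ Q) (hp : ∀ t ∈ s, p t → t ∈ Ico u (u + k)) :
    ∑ t ∈ s, (if p t then Q else 0) ≤ k * Q := by
  rw [← sum_filter, sum_const, nsmul_eq_mul]
  refine mul_le_mul_of_nonneg_right ?_ hQ
  calc (#(s.filter p) : ℝ) ≤ #(Ico u (u + k)) := by
        exact_mod_cast card_le_card fun t ht => hp t (mem_filter.1 ht).1 (mem_filter.1 ht).2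
    _ = k := by simp

theorem sum_Ico_le_sum_Ico_add_of_eq_shift {f g : ℤ → ℝ} {a b c : ℤ} {h m : ℕ} {Q : ℝ}
    (hQ : 0 ≤ Q) (hg : ∀ t, 0 ≤ g t) (hfQ : ∀ t ∈ Ico a b, f t ≤ Q)
    (hf : ∀ t, c ≤ t → f t = 0) (hfg : ∀ t, a + h ≤ t → t + m < min b c → f t = g (t + m)) :
    ∑ t ∈ Ico a b, f t ≤ ∑ t ∈ Ico a b, g t + (h + m) * Q := by
  classical
  have hpt : ∀ t ∈ Ico a b, f t ≤ (if t < a + h then Q else 0) +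
      ((if t + m < min b c then g (t + m) else 0) +
        (if min b c ≤ t + m ∧ t < min b c then Q else 0)) := by
    intro t ht
    have hft := hfQ t ht
    rw [mem_Ico] at ht
    have := hg (t + m)
    split_ifs <;> first
      | linarith
      | (rw [hfg t (by omega) ‹_›]; linarith)
      | (rw [hf t (by omega)]; linarith)
  have hshift :
      ∑ t ∈ Ico a b, (if t + m < min b c then g (t + m) else 0) ≤ ∑ t ∈ Ico a b, g t := by
    rw [← sum_filter, ← sum_image fun x _ y _ hxy => add_right_cancel hxy]
    refine sum_le_sum_of_subset_of_nonneg (fun u hu => ?_) fun u _ _ => hg u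
    obtain ⟨t, ht, rfl⟩ := mem_image.1 hu
    simp only [mem_filter, mem_Ico] at ht ⊢
    omega
  calc ∑ t ∈ Ico a b, f t ≤ _ := sum_le_sum hpt
    _ = _ := by rw [sum_add_distrib, sum_add_distrib]
    _ ≤ h * Q + (∑ t ∈ Ico a b, g t + m * Q) := by
      gcongr
      · exact sum_ite_le_mul_of_subset_Ico (u := a) hQ fun t ht h1 => by
          simp only [mem_Ico] at ht ⊢; omega
      · exact sum_ite_le_mul_of_subset_Ico (u := min b c - m) hQ fun t ht h1 => by
          simp only [mem_Ico] at ht ⊢; omega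
    _ = _ := by ring

theorem mul_le_mul_sum_Ico_of_le_periodic {g : ℤ → ℝ} (hg : ∀ t, 0 ≤ g t) {Q : ℝ} (hQ : 0 ≤ Q)
    {a b s : ℤ} (has : a ≤ s) {P : ℕ} (hP : 0 < P)
    (hgQ : ∀ j : ℕ, s + j * P < b → Q ≤ g (s + j * P)) :
    ((b - s : ℤ) : ℝ) * Q ≤ P * ∑ t ∈ Ico a b, g t := by
  have hsum : 0 ≤ ∑ t ∈ Ico a b, g t := sum_nonneg fun t _ => hg t
  rcases le_or_gt b s with hbs | hsb
  · have : ((b - s : ℤ) : ℝ) ≤ 0 := by exact_mod_cast (by omega : b - s ≤ 0)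
    exact (mul_nonpos_of_nonpos_of_nonneg this hQ).trans (mul_nonneg P.cast_nonneg hsum)
  set k := (b - s - 1).toNat / P + 1
  have hk : b - s ≤ k * P := by
    have := Nat.lt_div_mul_add (a := (b - s - 1).toNat) hP
    have : (b - s - 1).toNat < k * P := by simpa [k, add_mul] using this
    omega
  have hpts : ∀ j ∈ range k, s + j * P ∈ Ico a b := fun j hj => by
    have : j * P ≤ (b - s - 1).toNat :=
      (Nat.mul_le_mul_right P (by rw [mem_range] at hj; omega)).trans (Nat.div_mul_le_self _ _)
    have : (j : ℤ) * P ≤ b - s - 1 := by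
      have := (Nat.cast_le (α := ℤ)).2 this
      push_cast at this
      omega
    have : (0 : ℤ) ≤ j * P := by positivity
    rw [mem_Ico]
    omega
  have hcount : k * Q ≤ ∑ t ∈ Ico a b, g t := calc
    k * Q = ∑ j ∈ range k, Q := by simp
    _ ≤ ∑ j ∈ range k, g (s + j * P) := sum_le_sum fun j hj => hgQ j (mem_Ico.1 (hpts j hj)).2
    _ = ∑ t ∈ (range k).image (fun j : ℕ => s + j * P), g t :=
      (sum_image fun i _ j _ hij => by simpa [hP.ne'] using hij).symm
    _ ≤ ∑ t ∈ Ico a b, g t := sum_le_sum_of_subset_of_nonneg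
      (fun t ht => by obtain ⟨j, hj, rfl⟩ := mem_image.1 ht; exact hpts j hj) fun t _ _ => hg t
  calc ((b - s : ℤ) : ℝ) * Q ≤ ((k * P : ℕ) : ℝ) * Q := by gcongr; exact_mod_cast hk
    _ = P * (k * Q) := by push_cast; ring
    _ ≤ P * ∑ t ∈ Ico a b, g t := by gcongr

section Sequences

variable {K : Type*} {n : ℕ}

def window (y : ℤ → K) (t : ℤ) : Fin (n + 1) → K := fun j => y (t - n + (j : ℕ))

def tupleReward (ρ : (Fin n → K) → K → ℝ) (w : Fin (n + 1) → K) : ℝ :=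
  ρ (fun k => w k.castSucc) (w (Fin.last n))

def stepReward (r : ℤ → (Fin n → K) → K → ℝ) (y : ℤ → K) (t : ℤ) : ℝ :=
  r t (fun k : Fin n => y (t - (n : ℤ) + ((k : ℕ) : ℤ))) (y t)

def horizonReward (R : (Fin n → K) → K → ℝ) (T t : ℤ) : (Fin n → K) → K → ℝ :=
  if 1 ≤ t ∧ t ≤ T then R else 0

def IsWalk (E : K → K → Prop) (w : Fin (n + 1) → K) : Prop :=
  ∀ j : Fin n, E (w j.castSucc) (w j.succ)

def IsOptimalOn (E : K → K → Prop) (r : ℤ → (Fin n → K) → K → ℝ) (y : ℤ → K) (a b : ℤ) :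
    Prop :=
  ∀ z : ℤ → K, (∀ t, t < a → z t = y t) → (∀ t, a ≤ t → t < b → E (z (t - 1)) (z t)) →
    ∑ t ∈ Ico a b, stepReward r z t ≤ ∑ t ∈ Ico a b, stepReward r y t

def ReachableWithin (E : K → K → Prop) (Δ : ℕ) (a b : K) : Prop :=
  ∃ (m : ℕ) (p : ℕ → K), m ≤ Δ ∧ p 0 = a ∧ p m = b ∧ ∀ k < m, E (p k) (p (k + 1))

theorem stepReward_eq_tupleReward (r : ℤ → (Fin n → K) → K → ℝ) (y : ℤ → K) (t : ℤ) :
    stepReward r y t = tupleReward (r t) (window y t) := by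
  simp [stepReward, tupleReward, window]

theorem stepReward_congr {r : ℤ → (Fin n → K) → K → ℝ} {x y : ℤ → K} {t : ℤ}
    (h : ∀ u ≤ t, x u = y u) : stepReward r x t = stepReward r y t := by
  simp only [stepReward, h t le_rfl]
  congr
  funext k
  exact h _ (by omega)

theorem isWalk_window {E : K → K → Prop} {y : ℤ → K} {t : ℤ}
    (hy : ∀ u, t - n < u → u ≤ t → E (y (u - 1)) (y u)) : IsWalk E (window (n := n) y t) := by
  intro j
  have := hy (t - n + j + 1) (by omega) (by omega)
  rw [add_sub_cancel_right] at this
  simpa [window, add_assoc] using this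

section Horizon

variable {R : (Fin n → K) → K → ℝ} {T t : ℤ}

theorem stepReward_horizonReward_of_mem (y : ℤ → K) (ht : 1 ≤ t ∧ t ≤ T) :
    stepReward (horizonReward R T) y t = tupleReward R (window y t) := by
  rw [stepReward_eq_tupleReward, horizonReward, if_pos ht]

theorem stepReward_horizonReward_of_not_mem (y : ℤ → K) (ht : ¬(1 ≤ t ∧ t ≤ T)) :
    stepReward (horizonReward R T) y t = 0 := by
  simp [stepReward, horizonReward, ht]

theorem stepReward_horizonReward_nonneg (hR : ∀ h a, 0 ≤ R h a) (y : ℤ → K) (T t : ℤ) :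
    0 ≤ stepReward (horizonReward R T) y t := by
  unfold stepReward horizonReward
  split_ifs
  exacts [hR _ _, le_rfl]

theorem stepReward_horizonReward_le {E : K → K → Prop} {Q : ℝ} (hQ : 0 ≤ Q)
    (hmax : ∀ w, IsWalk E w → tupleReward R w ≤ Q) {y : ℤ → K}
    (hy : ∀ u, t - n < u → u ≤ t → E (y (u - 1)) (y u)) :
    stepReward (horizonReward R T) y t ≤ Q := by
  by_cases ht : 1 ≤ t ∧ t ≤ T
  · rw [stepReward_horizonReward_of_mem y ht]
    exact hmax _ (isWalk_window hy)
  · rw [stepReward_horizonReward_of_not_mem y ht]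
    exact hQ

end Horizon

end Sequences

section Walks

variable {K : Type*} {E : K → K → Prop}

def appendWalk (p : ℕ → K) (m : ℕ) (q : ℕ → K) : ℕ → K := fun k => if k ≤ m then p k else q (k - m)

theorem appendWalk_of_le {p q : ℕ → K} {m k : ℕ} (hk : k ≤ m) : appendWalk p m q k = p k :=
  if_pos hk

theorem appendWalk_add {p q : ℕ → K} {m : ℕ} (hpq : p m = q 0) (k : ℕ) :
    appendWalk p m q (m + k) = q k := by
  unfold appendWalk
  split_ifs with h
  · obtain rfl : k = 0 := by omega
    simpa using hpq
  · simp

theorem appendWalk_rel {p q : ℕ → K} {m m' : ℕ} (hp : ∀ k < m, E (p k) (p (k + 1)))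
    (hq : ∀ k < m', E (q k) (q (k + 1))) (hpq : p m = q 0) :
    ∀ k < m + m', E (appendWalk p m q k) (appendWalk p m q (k + 1)) := by
  intro k hk
  rcases lt_or_ge k m with hkm | hkm
  · rw [appendWalk_of_le hkm.le, appendWalk_of_le hkm]
    exact hp k hkm
  · obtain ⟨i, rfl⟩ := Nat.exists_eq_add_of_le hkm
    rw [add_assoc, appendWalk_add hpq, appendWalk_add hpq]
    exact hq i (by omega)

theorem rel_mod_of_closed {c : ℕ → K} {P : ℕ} (hP : 0 < P) (hc : ∀ k < P, E (c k) (c (k + 1)))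
    (hcP : c P = c 0) (k : ℕ) : E (c (k % P)) (c ((k + 1) % P)) := by
  have hk := Nat.mod_lt k hP
  rw [← Nat.mod_add_mod]
  rcases lt_or_ge (k % P + 1) P with hlt | hge
  · rw [Nat.mod_eq_of_lt hlt]
    exact hc _ hk
  · have hwrap : k % P + 1 = P := by omega
    have := hc _ hk
    rw [hwrap, Nat.mod_self, ← hcP]
    rwa [hwrap] at this

theorem exists_rel_of_reachableWithin {Δ : ℕ} (hdiam : ∀ a b, ReachableWithin E Δ a b)
    {a₀ b₀ : K} (h : E a₀ b₀) (a : K) : ∃ b, E a b := by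
  obtain ⟨m, p, -, rfl, hpm, hp⟩ := hdiam a a₀
  rcases m.eq_zero_or_pos with rfl | hm
  · exact ⟨b₀, hpm ▸ h⟩
  · exact ⟨p 1, hp 0 hm⟩

theorem exists_isWalk_forall_tupleReward_le [Fintype K] {n : ℕ} (hE : ∀ a, ∃ b, E a b) (a : K)
    (ρ : (Fin n → K) → K → ℝ) :
    ∃ w₀, IsWalk E w₀ ∧ ∀ w, IsWalk E w → tupleReward ρ w ≤ tupleReward ρ w₀ := by
  classical
  choose f hf using hE
  obtain ⟨w₀, hw₀, hmax⟩ := exists_max_image (univ.filter (IsWalk E)) (tupleReward ρ)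
    ⟨fun j => f^[j] a, by simp [IsWalk, Function.iterate_succ_apply', hf]⟩
  exact ⟨w₀, (mem_filter.1 hw₀).2, fun w hw => hmax w (by simpa using hw)⟩

theorem exists_closed_walk_through {Δ n : ℕ} (hdiam : ∀ a b, ReachableWithin E Δ a b)
    {w₀ : Fin (n + 1) → K} (hw₀ : IsWalk E w₀) :
    ∃ (c : ℕ → K) (P : ℕ), n ≤ P ∧ P ≤ Δ + n ∧ (∀ k < P, E (c k) (c (k + 1))) ∧ c P = c 0 ∧
      ∀ k : Fin (n + 1), c k = w₀ k := by
  obtain ⟨ℓ, p, hℓ, hp0, hpℓ, hp⟩ := hdiam (w₀ (Fin.last n)) (w₀ 0)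
  have hclamp : ∀ k : Fin (n + 1), Fin.clamp k n = k := fun k => by
    ext; simp [Fin.clamp, Fin.is_le]
  have hw : ∀ k < n, E (w₀ (Fin.clamp k n)) (w₀ (Fin.clamp (k + 1) n)) := fun k hk => by
    convert hw₀ ⟨k, hk⟩ using 2 <;> ext <;> simp [Fin.clamp] <;> omega
  have hjoin : w₀ (Fin.clamp n n) = p 0 := by rw [hp0]; congr; ext; simp [Fin.clamp]
  refine ⟨appendWalk (fun k => w₀ (Fin.clamp k n)) n p, n + ℓ, by omega, by omega,
    appendWalk_rel hw hp hjoin, ?_, fun k => ?_⟩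
  · rw [appendWalk_add hjoin, hpℓ, appendWalk_of_le (Nat.zero_le n)]
    congr
  · rw [appendWalk_of_le k.is_le, hclamp]

theorem exists_walk_periodic_through {Δ n : ℕ} (hn : 1 ≤ n)
    (hdiam : ∀ a b, ReachableWithin E Δ a b) {w₀ : Fin (n + 1) → K} (hw₀ : IsWalk E w₀) (a : K) :
    ∃ (V : ℕ → K) (ℓ P : ℕ), ℓ ≤ Δ ∧ 0 < P ∧ P ≤ Δ + n ∧ V 0 = a ∧ (∀ k, E (V k) (V (k + 1))) ∧
      ∀ (j : ℕ) (k : Fin (n + 1)), V (ℓ + j * P + k) = w₀ k := by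
  obtain ⟨c, P, hnP, hPΔ, hc, hcP, hcw⟩ := exists_closed_walk_through hdiam hw₀
  have hP : 0 < P := by omega
  obtain ⟨ℓ, p, hℓ, hp0, hpℓ, hp⟩ := hdiam a (w₀ 0)
  set C : ℕ → K := fun k => c (k % P)
  have hjoin : p ℓ = C 0 := by simp only [C, hpℓ, Nat.zero_mod, ← hcw 0]; rfl
  refine ⟨appendWalk p ℓ C, ℓ, P, hℓ, hP, hPΔ,
    by rw [appendWalk_of_le (Nat.zero_le ℓ), hp0],
    fun k => appendWalk_rel hp (fun k _ => rel_mod_of_closed hP hc hcP k) hjoin k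
      (by omega : k < ℓ + (k + 1)), fun j k => ?_⟩
  rw [add_assoc, appendWalk_add hjoin, ← hcw]
  simp only [C, Nat.mul_add_mod']
  rcases (k.is_le.trans hnP).lt_or_eq with hlt | heq
  · rw [Nat.mod_eq_of_lt hlt]
  · rw [heq, Nat.mod_self, hcP]

def splice (x : ℤ → K) (s : ℤ) (p : ℕ → K) : ℤ → K :=
  fun t => if t ≤ s then x t else p (t - s).toNat

theorem splice_of_le {x : ℤ → K} {s t : ℤ} {p : ℕ → K} (ht : t ≤ s) : splice x s p t = x t :=
  if_pos ht

theorem splice_add {x : ℤ → K} {s : ℤ} {p : ℕ → K} (hp : p 0 = x s) (k : ℕ) :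
    splice x s p (s + k) = p k := by
  unfold splice
  split_ifs with h
  · obtain rfl : k = 0 := by omega
    simpa using hp.symm
  · simp

theorem splice_rel {x : ℤ → K} {s : ℤ} {p : ℕ → K} (hp0 : p 0 = x s)
    (hp : ∀ k, E (p k) (p (k + 1))) {t : ℤ} (ht : s < t) :
    E (splice x s p (t - 1)) (splice x s p t) := by
  obtain ⟨k, rfl⟩ : ∃ k : ℕ, t = s + (k + 1 : ℕ) := ⟨(t - s - 1).toNat, by omega⟩
  rw [show s + ((k + 1 : ℕ) : ℤ) - 1 = s + k by push_cast; ring, splice_add hp0, splice_add hp0]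
  exact hp k

theorem exists_extension_rel (hE : ∀ a, ∃ b, E a b) {y : ℤ → K} {a T : ℤ}
    (hy : ∀ t, a ≤ t → t ≤ T → E (y (t - 1)) (y t)) :
    ∃ x : ℤ → K, (∀ t ≤ T, x t = y t) ∧ ∀ t, a ≤ t → E (x (t - 1)) (x t) := by
  choose f hf using hE
  refine ⟨splice y T fun k => f^[k] (y T), fun t ht => splice_of_le ht, fun t ht => ?_⟩
  rcases le_or_gt t T with htT | hTt
  · rw [splice_of_le htT, splice_of_le (by omega)]
    exact hy t ht htT
  · exact splice_rel rfl (fun k => by rw [Function.iterate_succ_apply']; exact hf _) hTt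

theorem exists_deviation_to_delayed {x y : ℤ → K} {a : ℤ} {Δ : ℕ}
    (hx : ∀ t, a ≤ t → E (x (t - 1)) (x t)) (hreach : ReachableWithin E Δ (y (a - 1)) (x (a - 1))) :
    ∃ (z : ℤ → K) (m : ℕ), m ≤ Δ ∧ (∀ t < a, z t = y t) ∧ (∀ t, a ≤ t → E (z (t - 1)) (z t)) ∧
      ∀ u, a - 1 + m ≤ u → z u = x (u - m) := by
  obtain ⟨m, p, hm, hp0, hpm, hp⟩ := hreach
  set q : ℕ → K := fun k => x (a - 1 + k)
  have hjoin : p m = q 0 := by simpa [q] using hpm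
  have hq : ∀ k, E (q k) (q (k + 1)) := fun k => by
    have := hx (a - 1 + k + 1) (by omega)
    rw [add_sub_cancel_right] at this
    simpa [q, add_assoc] using this
  set V := appendWalk p m q with hV_def
  have hV0 : V 0 = y (a - 1) := by rw [hV_def, appendWalk_of_le (Nat.zero_le m), hp0]
  have hV : ∀ k, E (V k) (V (k + 1)) := fun k =>
    appendWalk_rel hp (fun k _ => hq k) hjoin k (by omega : k < m + (k + 1))
  refine ⟨splice y (a - 1) V, m, hm, fun t ht => splice_of_le (by omega),
    fun t ht => splice_rel hV0 hV (by omega), fun u hu => ?_⟩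
  obtain ⟨k, rfl⟩ : ∃ k : ℕ, u = a - 1 + (m + k : ℕ) := ⟨(u - (a - 1) - m).toNat, by omega⟩
  rw [splice_add hV0, hV_def, appendWalk_add hjoin]
  show x (a - 1 + k) = x (a - 1 + ((m + k : ℕ) : ℤ) - m)
  congr 1
  push_cast
  ring

end Walks

section Phases

variable {K : Type*} {n Δ : ℕ} {E : K → K → Prop} {R : (Fin n → K) → K → ℝ} {T : ℤ}

/-- Deviating in at most `Δ` steps onto the path `x` and following it with that delay, the
optimal block `y` loses to `x` at most the first `n - 1` rewards, whose histories reach back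
before the junction, and the last `Δ`. -/
theorem sum_stepReward_le_of_isOptimalOn_of_reachableWithin (hR : ∀ h a, 0 ≤ R h a) {Q : ℝ}
    (hQ : 0 ≤ Q) (hmax : ∀ w, IsWalk E w → tupleReward R w ≤ Q) {x y : ℤ → K} {a b : ℤ}
    (hopt : IsOptimalOn E (horizonReward R T) y a b) (hx : ∀ t, 1 ≤ t → E (x (t - 1)) (x t))
    (ha : n + 1 ≤ a) (hreach : ReachableWithin E Δ (y (a - 1)) (x (a - 1))) :
    ∑ t ∈ Ico a b, stepReward (horizonReward R T) x t ≤
      ∑ t ∈ Ico a b, stepReward (horizonReward R T) y t + ((n - 1 + Δ : ℕ) : ℝ) * Q := by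
  obtain ⟨z, m, hm, hz_pre, hz, hzx⟩ :=
    exists_deviation_to_delayed (fun t ht => hx t (by omega)) hreach
  have hzy := hopt z hz_pre fun t ht _ => hz t ht
  have hshift := sum_Ico_le_sum_Ico_add_of_eq_shift (f := stepReward (horizonReward R T) x)
    (g := stepReward (horizonReward R T) z) (a := a) (b := b) (h := n - 1) (m := m) (c := T + 1) hQ
    (stepReward_horizonReward_nonneg hR z T)
    (fun t ht => stepReward_horizonReward_le hQ hmax fun u hu _ => hx u (by
      rw [mem_Ico] at ht; omega))
    (fun t ht => stepReward_horizonReward_of_not_mem x (by omega)) fun t h1 h2 => by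
      rw [stepReward_horizonReward_of_mem x ⟨by omega, by omega⟩,
        stepReward_horizonReward_of_mem z ⟨by omega, by omega⟩]
      congr 1
      funext k
      simp only [window]
      rw [hzx (t + m - n + k) (by omega)]
      congr 1
      ring
  calc _ ≤ _ := hshift
    _ ≤ _ := by
      push_cast
      gcongr

/-- Walking to a best walk `w₀` and then cycling through it, `y` could collect its reward once
every `Δ + n` steps. -/
theorem le_mul_sum_stepReward_of_isOptimalOn (hn : 1 ≤ n) (hR : ∀ h a, 0 ≤ R h a)
    (hdiam : ∀ a b, ReachableWithin E Δ a b) {w₀ : Fin (n + 1) → K} (hw₀ : IsWalk E w₀)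
    {y : ℤ → K} {a b : ℤ} (hopt : IsOptimalOn E (horizonReward R T) y a b) (ha : 1 ≤ a)
    (hb : b ≤ T + 1) :
    ((b - a + 1 - (Δ + n) : ℤ) : ℝ) * tupleReward R w₀ ≤
      (Δ + n) * ∑ t ∈ Ico a b, stepReward (horizonReward R T) y t := by
  obtain ⟨V, ℓ, P, hℓ, hP, hPΔ, hV0, hV, hVw⟩ :=
    exists_walk_periodic_through hn hdiam hw₀ (y (a - 1))
  set z := splice y (a - 1) V with hz_def
  have hQ : 0 ≤ tupleReward R w₀ := hR _ _
  have hcollect : ∀ j : ℕ, a - 1 + ℓ + n + j * P < b →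
      tupleReward R w₀ ≤ stepReward (horizonReward R T) z (a - 1 + ℓ + n + j * P) := by
    intro j hj
    have : (0 : ℤ) ≤ j * P := by positivity
    rw [stepReward_horizonReward_of_mem z ⟨by omega, by omega⟩]
    refine le_of_eq (congrArg _ (funext fun k => ?_))
    simp only [window]
    rw [show a - 1 + ℓ + n + j * P - n + k = a - 1 + ((ℓ + j * P + k : ℕ) : ℤ) by push_cast; ring,
      hz_def, splice_add hV0, hVw]
  have hcount := mul_le_mul_sum_Ico_of_le_periodic (stepReward_horizonReward_nonneg hR z T) hQ
    (by omega : a ≤ a - 1 + ℓ + n) hP hcollect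
  have hzy :=
    hopt z (fun t ht => splice_of_le (by omega)) fun t ht _ => splice_rel hV0 hV (by omega)
  have hy : 0 ≤ ∑ t ∈ Ico a b, stepReward (horizonReward R T) y t :=
    sum_nonneg fun t _ => stepReward_horizonReward_nonneg hR y T t
  calc ((b - a + 1 - (Δ + n) : ℤ) : ℝ) * tupleReward R w₀
      ≤ ((b - (a - 1 + ℓ + n) : ℤ) : ℝ) * tupleReward R w₀ := by
        refine mul_le_mul_of_nonneg_right ?_ hQ
        exact_mod_cast (by omega : b - a + 1 - (Δ + n) ≤ b - (a - 1 + ℓ + n))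
    _ ≤ P * ∑ t ∈ Ico a b, stepReward (horizonReward R T) z t := hcount
    _ ≤ P * ∑ t ∈ Ico a b, stepReward (horizonReward R T) y t := by gcongr
    _ ≤ (Δ + n) * ∑ t ∈ Ico a b, stepReward (horizonReward R T) y t := by
        gcongr
        exact_mod_cast hPΔ

theorem mul_le_mul_sum_stepReward_of_isOptimalOn (hn : 1 ≤ n) (hR : ∀ h a, 0 ≤ R h a)
    (hdiam : ∀ a b, ReachableWithin E Δ a b) {w₀ : Fin (n + 1) → K} (hw₀ : IsWalk E w₀)
    {y : ℤ → K} {a b : ℤ} (hopt : IsOptimalOn E (horizonReward R T) y a b) (ha : 1 ≤ a)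
    (hb : b ≤ T + 1) {L : ℕ} (hlen : a + (L / 2 : ℕ) + 1 ≤ b) :
    ((L : ℝ) - 8 * ((Δ : ℝ) + n - 1) + 1) * tupleReward R w₀ ≤
      2 * ((Δ : ℝ) + n) * ∑ t ∈ Ico a b, stepReward (horizonReward R T) y t := by
  have hL : (L : ℤ) - 8 * (Δ + n - 1) + 1 ≤ 2 * (b - a + 1 - (Δ + n)) := by omega
  calc ((L : ℝ) - 8 * ((Δ : ℝ) + n - 1) + 1) * tupleReward R w₀
      ≤ 2 * (((b - a + 1 - (Δ + n) : ℤ) : ℝ) * tupleReward R w₀) := by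
        rw [← mul_assoc]
        exact mul_le_mul_of_nonneg_right (by exact_mod_cast hL) (hR _ _)
    _ ≤ 2 * ((Δ + n) * ∑ t ∈ Ico a b, stepReward (horizonReward R T) y t) :=
        mul_le_mul_of_nonneg_left
          (le_mul_sum_stepReward_of_isOptimalOn hn hR hdiam hw₀ hopt ha hb) zero_le_two
    _ = _ := by ring

theorem sum_stepReward_le_of_forall_isOptimalOn [Fintype K] (hn : 1 ≤ n) (hR : ∀ h a, 0 ≤ R h a)
    (hdiam : ∀ a b, ReachableWithin E Δ a b) {L : ℕ} (hL : 8 * (Δ + n - 1) ≤ L) {τ : ℕ → ℤ}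
    (hτ0 : τ 0 = 1) (hτ : ∀ i, τ i + (L / 2 : ℕ) + 1 ≤ τ (i + 1)) {y : ℤ → K}
    (hopt : ∀ i, τ i ≤ T → IsOptimalOn E (horizonReward R T) y (τ i) (τ (i + 1))) {x : ℤ → K}
    (hxy : ∀ t < 1, x t = y t) (hx : ∀ t, 1 ≤ t → E (x (t - 1)) (x t)) (hT : 1 ≤ T) :
    ∑ t ∈ Icc 1 T, stepReward (horizonReward R T) x t ≤
      (1 + 2 * ((Δ : ℝ) + n) * ((Δ : ℝ) + n - 1) / ((L : ℝ) - 8 * ((Δ : ℝ) + n - 1) + 1)) *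
        ∑ t ∈ Icc 1 T, stepReward (horizonReward R T) y t := by
  obtain ⟨w₀, hw₀, hmax⟩ := exists_isWalk_forall_tupleReward_le
    (exists_rel_of_reachableWithin hdiam (hx 1 le_rfl)) (x 0) R
  have hQ : 0 ≤ tupleReward R w₀ := hR _ _
  have hmono : StrictMono τ := strictMono_nat_of_lt_succ fun i => by have := hτ i; omega
  obtain ⟨N, hN, hNT⟩ := hmono.exists_le_lt_succ (hτ0 ▸ hT)
  have hopt' : ∀ i ≤ N, IsOptimalOn E (horizonReward R T) y (τ i) (τ (i + 1)) := fun i hi =>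
    hopt i ((hmono.monotone hi).trans hN)
  have hstart : ∀ i, (L / 2 : ℕ) + 2 ≤ τ (i + 1) := fun i => by
    have : τ 0 + (L / 2 : ℕ) + 1 ≤ τ 1 := hτ 0
    have := hmono.monotone (Nat.le_add_left 1 i)
    omega
  have hL' : 8 * ((Δ : ℝ) + n - 1) ≤ L := by
    have := (Nat.cast_le (α := ℝ)).2 hL
    rwa [Nat.cast_mul, Nat.cast_sub (by omega), Nat.cast_add, Nat.cast_one, Nat.cast_ofNat] at this
  have hphases : ∀ z : ℤ → K, ∑ t ∈ Icc 1 T, stepReward (horizonReward R T) z t =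
      ∑ i ∈ range (N + 1), ∑ t ∈ Ico (τ i) (τ (i + 1)), stepReward (horizonReward R T) z t :=
    fun z => by
      rw [sum_range_sum_Ico_eq_sum_Icc hmono.monotone (by omega) hNT
        fun t ht => stepReward_horizonReward_of_not_mem z (by omega), hτ0]
  rw [hphases, hphases]
  refine sum_range_succ_le_one_add_mul (Q := tupleReward R w₀)
    (sub_nonneg.2 (by norm_cast; omega)) (by positivity) (by linarith)
    (fun i => sum_nonneg fun t _ => stepReward_horizonReward_nonneg hR y T t) ?_
    (fun i hi => ?_) (fun i hi => ?_)
  · exact hopt' 0 N.zero_le x (fun t ht => hxy t (by omega)) fun t ht _ => hx t (by omega)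
  · convert sum_stepReward_le_of_isOptimalOn_of_reachableWithin hR hQ hmax (hopt' (i + 1) hi) hx
      (by have := hstart i; omega) (hdiam _ _) using 3
    push_cast [Nat.cast_sub hn]
    ring
  · have hb : τ (i + 1) ≤ τ N := hmono.monotone hi
    exact mul_le_mul_sum_stepReward_of_isOptimalOn hn hR hdiam hw₀ (hopt' i hi.le)
      (by have := hmono.monotone i.zero_le; omega) (by omega) (hτ i)

end Phases

theorem peek_reset_competitive_general
    (K : Type) [Fintype K]
    (E : K → K → Prop)
    (n : ℕ) (hn : 1 ≤ n)
    (Δ : ℕ)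
    (hdiam : ∀ a b : K, ∃ (m : ℕ) (p : ℕ → K),
      m ≤ Δ ∧ p 0 = a ∧ p m = b ∧ ∀ k : ℕ, k < m → E (p k) (p (k + 1)))
    (L : ℕ) (hL : 8 * (Δ + n - 1) ≤ L)
    (T : ℤ)
    (R : (Fin n → K) → K → ℝ) (hR : ∀ h y, 0 ≤ R h y)
    (r : ℤ → (Fin n → K) → K → ℝ)
    (hr : ∀ t : ℤ, r t = if (1 ≤ t ∧ t ≤ T) then R else 0)
    (τ : ℕ → ℤ) (hτ0 : τ 0 = 1)
    (hτmem : ∀ i : ℕ,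
      τ i + ((L / 2 : ℕ) : ℤ) + 1 ≤ τ (i + 1) ∧ τ (i + 1) ≤ τ i + (L : ℤ))
    (d : ℤ → K)
    (yhat : ℤ → K) (hyhat0 : ∀ t : ℤ, t ≤ 0 → yhat t = d t)
    (hphase : ∀ i : ℕ, τ i ≤ T →
      ∀ y : ℤ → K, (∀ t : ℤ, t < τ i → y t = yhat t) →
        (∀ t : ℤ, τ i ≤ t → t ≤ τ (i + 1) - 1 → E (y (t - 1)) (y t)) →
        (∑ t ∈ Finset.Icc (τ i) (τ (i + 1) - 1),
            r t (fun k : Fin n => y (t - (n : ℤ) + ((k : ℕ) : ℤ))) (y t))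
          ≤ ∑ t ∈ Finset.Icc (τ i) (τ (i + 1) - 1),
              r t (fun k : Fin n => yhat (t - (n : ℤ) + ((k : ℕ) : ℤ))) (yhat t))
    (ON : ℝ)
    (hON : ON = ∑ i ∈ Finset.Icc (1 : ℤ) T,
        r i (fun k : Fin n => yhat (i - (n : ℤ) + ((k : ℕ) : ℤ))) (yhat i)) :
    ∀ y : ℤ → K, (∀ t : ℤ, t ≤ 0 → y t = d t) →
      (∀ t : ℤ, 1 ≤ t → t ≤ T → E (y (t - 1)) (y t)) →
      (∑ i ∈ Finset.Icc (1 : ℤ) T,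
          r i (fun k : Fin n => y (i - (n : ℤ) + ((k : ℕ) : ℤ))) (y i))
        ≤ (1 + 2 * ((Δ : ℝ) + (n : ℝ)) * ((Δ : ℝ) + (n : ℝ) - 1) /
            ((L : ℝ) - 8 * ((Δ : ℝ) + (n : ℝ) - 1) + 1)) * ON := by
  intro y hy0 hy
  obtain rfl : r = horizonReward R T := funext hr
  subst hON
  change ∑ t ∈ Icc 1 T, stepReward (horizonReward R T) y t ≤
    _ * ∑ t ∈ Icc 1 T, stepReward (horizonReward R T) yhat t
  rcases lt_or_ge T 1 with hT | hT
  · simp [Icc_eq_empty_of_lt hT]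
  obtain ⟨x, hxy, hx⟩ :=
    exists_extension_rel (exists_rel_of_reachableWithin hdiam (hy 1 le_rfl hT)) hy
  have hopt : ∀ i, τ i ≤ T → IsOptimalOn E (horizonReward R T) yhat (τ i) (τ (i + 1)) :=
    fun i hi z hz hzE => by
      have := hphase i hi z hz fun t h1 h2 => hzE t h1 (by omega)
      rwa [Icc_sub_one_right_eq_Ico] at this
  rw [sum_congr rfl fun t ht =>
    (stepReward_congr fun u hu => hxy u (by rw [mem_Icc] at ht; omega)).symm]
  exact sum_stepReward_le_of_forall_isOptimalOn hn hR hdiam hL hτ0 (fun i => (hτmem i).1) hopt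
    (fun t ht => by rw [hxy t (by omega), hy0 t (by omega), hyhat0 t (by omega)]) hx hT

/-- Peek Reset with latency L ≥ 8(Δ+n−1) on an n-th order time-homogeneous
instance whose transition digraph `E` has diameter Δ is
(1 + 2(Δ+n)(Δ+n−1)/(L − 8(Δ+n−1) + 1))-competitive.

`R h y` is the (nonnegative, time-homogeneous) reward of moving to state `y` when the `n`
preceding states are `h 0, …, h (n-1)`; rewards at times outside the horizon `{1,…,T}` are
zero (`r`).  `q t` is the maximum over (n+1)-tuples (y_{t−n},…,y_t) of the time-`t` reward
R(y_t | y_{t−n},…,y_{t−1}).  `τ i` is the start time of phase `i` (phase 0 starts at time 1);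
the end `τ (i+1)` of phase `i` lies in [τ i + ⌊L/2⌋ + 1, τ i + L] and minimizes `q` there
(ties broken arbitrarily).  `yhat` is the valid sequence produced by Peek Reset from the
dummy states `d`: in each phase starting within the horizon its block maximizes the
undiscounted reward over all valid continuations of its history.  The conclusion bounds the
total reward of every valid offline sequence starting from the dummy states, hence OPT. -/
theorem peek_reset_competitive
    (K : Type) [Fintype K] [Nonempty K]
    (E : K → K → Prop)
    (n : ℕ) (hn : 1 ≤ n)
    (Δ : ℕ) (hΔ : 1 ≤ Δ)
    (hdiam : ∀ a b : K, ∃ (m : ℕ) (p : ℕ → K),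
      m ≤ Δ ∧ p 0 = a ∧ p m = b ∧ ∀ k : ℕ, k < m → E (p k) (p (k + 1)))
    (L : ℕ) (hL : 8 * (Δ + n - 1) ≤ L)
    (T : ℤ)
    (R : (Fin n → K) → K → ℝ) (hR : ∀ h y, 0 ≤ R h y)
    (r : ℤ → (Fin n → K) → K → ℝ)
    (hr : ∀ t : ℤ, r t = if (1 ≤ t ∧ t ≤ T) then R else 0)
    (q : ℤ → ℝ)
    (hq : ∀ t : ℤ, IsGreatest
      {v : ℝ | ∃ w : Fin (n + 1) → K,
        v = r t (fun k : Fin n => w k.castSucc) (w (Fin.last n))} (q t))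
    (τ : ℕ → ℤ) (hτ0 : τ 0 = 1)
    (hτmem : ∀ i : ℕ,
      τ i + ((L / 2 : ℕ) : ℤ) + 1 ≤ τ (i + 1) ∧ τ (i + 1) ≤ τ i + (L : ℤ))
    (hτmin : ∀ i : ℕ, ∀ t : ℤ,
      τ i + ((L / 2 : ℕ) : ℤ) + 1 ≤ t → t ≤ τ i + (L : ℤ) → q (τ (i + 1)) ≤ q t)
    (d : ℤ → K)
    (yhat : ℤ → K) (hyhat0 : ∀ t : ℤ, t ≤ 0 → yhat t = d t)
    (hyhatvalid : ∀ t : ℤ, 1 ≤ t → t ≤ T → E (yhat (t - 1)) (yhat t))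
    (hphase : ∀ i : ℕ, τ i ≤ T →
      ∀ y : ℤ → K, (∀ t : ℤ, t < τ i → y t = yhat t) →
        (∀ t : ℤ, τ i ≤ t → t ≤ τ (i + 1) - 1 → E (y (t - 1)) (y t)) →
        (∑ t ∈ Finset.Icc (τ i) (τ (i + 1) - 1),
            r t (fun k : Fin n => y (t - (n : ℤ) + ((k : ℕ) : ℤ))) (y t))
          ≤ ∑ t ∈ Finset.Icc (τ i) (τ (i + 1) - 1),
              r t (fun k : Fin n => yhat (t - (n : ℤ) + ((k : ℕ) : ℤ))) (yhat t))
    (ON : ℝ)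
    (hON : ON = ∑ i ∈ Finset.Icc (1 : ℤ) T,
        r i (fun k : Fin n => yhat (i - (n : ℤ) + ((k : ℕ) : ℤ))) (yhat i)) :
    ∀ y : ℤ → K, (∀ t : ℤ, t ≤ 0 → y t = d t) →
      (∀ t : ℤ, 1 ≤ t → t ≤ T → E (y (t - 1)) (y t)) →
      (∑ i ∈ Finset.Icc (1 : ℤ) T,
          r i (fun k : Fin n => y (i - (n : ℤ) + ((k : ℕ) : ℤ))) (y i))
        ≤ (1 + 2 * ((Δ : ℝ) + (n : ℝ)) * ((Δ : ℝ) + (n : ℝ) - 1) /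
            ((L : ℝ) - 8 * ((Δ : ℝ) + (n : ℝ) - 1) + 1)) * ON :=
  peek_reset_competitive_general K E n hn Δ hdiam L hL T R hR r hr τ hτ0 hτmem d yhat hyhat0 hphase
    ON hON
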